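/- For n ≥ 2(m+1), the Grundy domination number of the m-th power of the n-cycle satisfies γ_gr(C_n^m) = n − 2m. -/

import Mathlib

namespace GrundyDom

/-- Closed neighborhood N[v]. -/
def cn {V : Type*} (G : SimpleGraph V) (v : V) : Set V := insert v (G.neighborSet v)

/-- Union of closed neighborhoods of the vertices of a list. -/
def cnUnion {V : Type*} (G : SimpleGraph V) (L : List V) : Set V := ⋃ v ∈ L, cn G v

/-- Private neighborhood of `v` with respect to the first `i` entries of `S`:
`N[v] \ (N[v_1] ∪ ... ∪ N[v_i])`. -/
def PN {V : Type*} (G : SimpleGraph V) (S : List V) (i : ℕ) (v : V) : Set V :=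
  cn G v \ cnUnion G (S.take i)

/-- A legal dominating sequence: distinct vertices, dominating set, and every
vertex of the sequence has a nonempty private neighborhood w.r.t. its predecessors. -/
structure IsLegal {V : Type*} (G : SimpleGraph V) (S : List V) : Prop where
  nodup : S.Nodup
  dominates : ∀ v : V, ∃ u ∈ S, v ∈ cn G u
  legal : ∀ i : Fin S.length, (PN G S i.val (S.get i)).Nonempty

/-- The set `I_S` of vertices that footprint themselves in `S`. -/
def selfFoot {V : Type*} (G : SimpleGraph V) (S : List V) : Set V :=
  {v | ∃ i : Fin S.length, S.get i = v ∧ v ∈ PN G S i.val v}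

/-- Grundy domination number: maximum length of a legal dominating sequence. -/
noncomputable def gammaGr {V : Type*} (G : SimpleGraph V) : ℕ :=
  sSup {k | ∃ S : List V, IsLegal G S ∧ S.length = k}

/-- `γ_gr(G, I)`: maximum length of a legal dominating sequence `S` with `I_S = I`. -/
noncomputable def gammaGrOn {V : Type*} (G : SimpleGraph V) (I : Set V) : ℕ :=
  sSup {k | ∃ S : List V, IsLegal G S ∧ selfFoot G S = I ∧ S.length = k}

/-- `γ_gr^u(G)`: maximum of `γ_gr(G, I)` over independent sets `I` containing `u`. -/
noncomputable def gammaGrVert {V : Type*} (G : SimpleGraph V) (u : V) : ℕ :=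
  sSup {k | ∃ I : Set V, (∀ ⦃a⦄, a ∈ I → ∀ ⦃b⦄, b ∈ I → a ≠ b → ¬ G.Adj a b) ∧
    u ∈ I ∧ k = gammaGrOn G I}

/-- Independent set of a graph. -/
def IsIndep {V : Type*} (G : SimpleGraph V) (I : Set V) : Prop :=
  ∀ ⦃u⦄, u ∈ I → ∀ ⦃v⦄, v ∈ I → u ≠ v → ¬ G.Adj u v

/-- The X-join product `G ↩ 𝓡`: replace each vertex `v` of `G` by the graph `R v`. -/
def XJoin {V : Type*} (G : SimpleGraph V) {W : V → Type*} (R : ∀ v, SimpleGraph (W v)) :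
    SimpleGraph (Σ v, W v) where
  Adj x y := G.Adj x.1 y.1 ∨ ∃ h : x.1 = y.1, (R y.1).Adj (h ▸ x.2) y.2
  symm := by
    constructor
    rintro ⟨a, xa⟩ ⟨b, yb⟩ (h | ⟨h, hadj⟩)
    · exact Or.inl h.symm
    · dsimp at h hadj
      subst h
      exact Or.inr ⟨rfl, (R a).symm.symm _ _ hadj⟩
  loopless := by
    constructor
    rintro ⟨a, xa⟩ (h | ⟨h, hadj⟩)
    · exact G.loopless.irrefl a h
    · exact (R a).loopless.irrefl xa hadj

/-- The lexicographic product `G ∘ H`. -/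
def Lex {V W : Type*} (G : SimpleGraph V) (H : SimpleGraph W) : SimpleGraph (V × W) where
  Adj x y := G.Adj x.1 y.1 ∨ (x.1 = y.1 ∧ H.Adj x.2 y.2)
  symm := by
    constructor
    rintro x y (h | ⟨h1, h2⟩)
    · exact Or.inl h.symm
    · exact Or.inr ⟨h1.symm, h2.symm⟩
  loopless := by
    constructor
    rintro x (h | ⟨_, h⟩)
    · exact G.loopless.irrefl _ h
    · exact H.loopless.irrefl _ h

/-- The replacement graph `G_{u ↩ H}`: replace the vertex `u` of `G` by `H`. -/
def Replace {V : Type*} (G : SimpleGraph V) (u : V) {W : Type*} (H : SimpleGraph W) :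
    SimpleGraph ({v : V // v ≠ u} ⊕ W) where
  Adj x y :=
    match x, y with
    | Sum.inl a, Sum.inl b => G.Adj a.1 b.1
    | Sum.inl a, Sum.inr _ => G.Adj a.1 u
    | Sum.inr _, Sum.inl b => G.Adj u b.1
    | Sum.inr h1, Sum.inr h2 => H.Adj h1 h2
  symm := ⟨by rintro (a|a) (b|b) h <;> exact h.symm⟩
  loopless := ⟨by rintro (a|a) h <;> exact h.ne rfl⟩

/-- `C_n^m`: the m-th power of the n-cycle, on vertex set `ZMod n`;
two vertices are adjacent iff their circular distance is between 1 and m. -/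
def cyclePow (n m : ℕ) : SimpleGraph (ZMod n) where
  Adj i j := i ≠ j ∧ ∃ k : ℕ, 1 ≤ k ∧ k ≤ m ∧ (j = i + k ∨ i = j + k)
  symm := by
    constructor
    rintro i j ⟨hne, k, h1, h2, h3⟩
    exact ⟨hne.symm, k, h1, h2, h3.symm⟩
  loopless := ⟨fun i h => h.1 rfl⟩

/-- `P_n^m`: the m-th power of the n-path, on vertex set `Fin n`
(vertex `i` represents the `(i+1)`-st vertex of the path);
two vertices adjacent iff their distance is between 1 and m. -/
def pathPow (n m : ℕ) : SimpleGraph (Fin n) where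
  Adj i j := i ≠ j ∧ Nat.dist i.val j.val ≤ m
  symm := by
    constructor
    rintro i j ⟨hne, hd⟩
    exact ⟨hne.symm, by rwa [Nat.dist_comm]⟩
  loopless := ⟨fun i h => h.1 rfl⟩

end GrundyDom

/-!
Fix a legal dominating sequence `v₁, …, vₖ` of `C_n^m` and pick for each `vᵢ` a footprint: a
vertex of `N[vᵢ]` not dominated by its predecessors. Footprints are distinct, and none after the
first lies in `N[v₁]`, which has `2m + 1` vertices; hence `k - 1 ≤ n - (2m + 1)`. Conversely
`0, 1, …, n - 2m - 1` is legal, the footprint of `i` being `i + m`, and it dominates because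
every vertex is within `m` of it (the vertices near `n` wrap around to `0`).
-/

namespace GrundyDom

section Legal

variable {V : Type*} {G : SimpleGraph V}

theorem mem_cnUnion {L : List V} {v : V} : v ∈ cnUnion G L ↔ ∃ u ∈ L, v ∈ cn G u := by
  simp [cnUnion]

theorem IsLegal.exists_injective_footprint {S : List V} (hS : IsLegal G S) :
    ∃ f : Fin S.length → V,
      Function.Injective f ∧ ∀ i : Fin S.length, f i ∈ PN G S i.val (S.get i) := by
  choose f hf using hS.legal
  refine ⟨f, .of_lt_imp_ne fun i j hij hfij => ?_, hf⟩
  exact (hf j).2 <| mem_cnUnion.2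
    ⟨S.get i, List.mem_take_iff_getElem.2 ⟨i, by omega, rfl⟩, hfij ▸ (hf i).1⟩

theorem IsLegal.length_add_ncard_cn_le [Finite V] {v : V} {T : List V}
    (hS : IsLegal G (v :: T)) : T.length + (cn G v).ncard ≤ Nat.card V := by
  obtain ⟨f, hf_inj, hf⟩ := hS.exists_injective_footprint
  have hinter : Set.range f ∩ cn G v ⊆ {f ⟨0, by simp⟩} := by
    rintro _ ⟨⟨i, rfl⟩, hi⟩
    by_contra hi0
    have hpos : 0 < i.val := Nat.pos_of_ne_zero fun h => hi0 (congrArg f (Fin.ext h))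
    exact (hf i).2 (mem_cnUnion.2 ⟨v, List.mem_take_iff_getElem.2 ⟨0, by simp [hpos], rfl⟩, hi⟩)
  have hunion := Set.ncard_union_add_ncard_inter (Set.range f) (cn G v)
  have hcard := Set.ncard_le_card (Set.range f ∪ cn G v)
  have hone := (Set.ncard_le_ncard hinter).trans_eq (Set.ncard_singleton _)
  simp only [Set.ncard_range_of_injective hf_inj, Nat.card_fin, List.length_cons] at hunion
  omega

end Legal

section CyclePow

variable {n m : ℕ}

theorem mem_cn_cyclePow_iff {u v : ZMod n} :
    u ∈ cn (cyclePow n m) v ↔ ∃ k ≤ m, u = v + k ∨ v = u + k := by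
  simp only [cn, Set.mem_insert_iff, SimpleGraph.mem_neighborSet, cyclePow]
  constructor
  · rintro (rfl | ⟨-, k, -, hk, h⟩)
    · exact ⟨0, Nat.zero_le _, by simp⟩
    · exact ⟨k, hk, h⟩
  · rintro ⟨k, hk, h⟩
    by_cases huv : u = v
    · exact Or.inl huv
    · refine Or.inr ⟨Ne.symm huv, k, Nat.one_le_iff_ne_zero.2 ?_, hk, h⟩
      rintro rfl
      simp only [Nat.cast_zero, add_zero] at h
      exact huv (h.elim id Eq.symm)

theorem two_mul_add_one_le_ncard_cn_cyclePow (h : 2 * m < n) (v : ZMod n) :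
    2 * m + 1 ≤ (cn (cyclePow n m) v).ncard := by
  have : NeZero n := ⟨by omega⟩
  refine Set.le_ncard_of_inj_on_range (fun i => v - m + i) (fun i _ => ?_)
    (fun i hi j hj hij => CharP.natCast_injOn_Iio (ZMod n) n
      (show i < n by omega) (show j < n by omega) (by simpa using hij))
  rw [mem_cn_cyclePow_iff]
  rcases le_total m i with hmi | him
  · exact ⟨i - m, by omega, Or.inl (by push_cast [Nat.cast_sub hmi]; ring)⟩
  · exact ⟨m - i, by omega, Or.inr (by push_cast [Nat.cast_sub him]; ring)⟩

theorem IsLegal.length_le_cyclePow (h : 2 * m < n) {S : List (ZMod n)}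
    (hS : IsLegal (cyclePow n m) S) : S.length ≤ n - 2 * m := by
  cases S with
  | nil => exact Nat.zero_le _
  | cons v T =>
    have : NeZero n := ⟨by omega⟩
    have hlen := hS.length_add_ncard_cn_le
    have hcn := two_mul_add_one_le_ncard_cn_cyclePow h v
    rw [Nat.card_zmod] at hlen
    simp only [List.length_cons]
    omega

theorem isLegal_cyclePow_range (h : 2 * m < n) :
    IsLegal (cyclePow n m) ((List.range (n - 2 * m)).map (Nat.cast : ℕ → ZMod n)) where
  nodup := List.nodup_range.map_on fun a ha b hb hab =>
    CharP.natCast_injOn_Iio (ZMod n) n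
      (show a < n by simp at ha; omega) (show b < n by simp at hb; omega) hab
  dominates := by
    have : NeZero n := ⟨by omega⟩
    intro v
    obtain ⟨w, hw, rfl⟩ : ∃ w < n, (w : ZMod n) = v := ⟨v.val, v.val_lt, ZMod.natCast_zmod_val v⟩
    simp only [List.mem_map, List.mem_range, exists_exists_and_eq_and, mem_cn_cyclePow_iff]
    rcases le_or_gt w m with hwm | hwm
    · exact ⟨0, by omega, w, hwm, Or.inl (by simp)⟩
    rcases lt_or_ge w (n - m) with hwn | hwn
    · exact ⟨w - m, by omega, m, le_rfl,
        Or.inl (by rw [← Nat.cast_add, Nat.sub_add_cancel hwm.le])⟩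
    · exact ⟨0, by omega, n - w, by omega,
        Or.inr (by
          rw [← Nat.cast_add, Nat.add_sub_cancel' hw.le, ZMod.natCast_self, Nat.cast_zero])⟩
  legal := by
    rintro ⟨i, hi⟩
    simp only [List.length_map, List.length_range] at hi
    refine ⟨((i + m : ℕ) : ZMod n), mem_cn_cyclePow_iff.2 ⟨m, le_rfl, Or.inl (by simp)⟩, ?_⟩
    intro hmem
    obtain ⟨_, hu, hjc⟩ := mem_cnUnion.1 hmem
    simp only [← List.map_take, List.take_range, List.mem_map, List.mem_range] at hu
    obtain ⟨j, hj, rfl⟩ := hu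
    obtain ⟨k, hk, heq | heq⟩ := mem_cn_cyclePow_iff.1 hjc <;> rw [← Nat.cast_add] at heq
    · have := CharP.natCast_injOn_Iio (ZMod n) n (show i + m < n by omega)
        (show j + k < n by omega) heq
      omega
    · have := CharP.natCast_injOn_Iio (ZMod n) n (show j < n by omega)
        (show i + m + k < n by omega) heq
      omega

end CyclePow

end GrundyDom

open GrundyDom Finset

theorem stmt9_general (n m : ℕ) (hn : 2 * (m + 1) ≤ n) :
    (gammaGr (cyclePow n m) : ℤ) = (n : ℤ) - 2 * m := by
  have hlt : 2 * m < n := by omega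
  have hgr : IsGreatest {k | ∃ S : List (ZMod n), IsLegal (cyclePow n m) S ∧ S.length = k}
      (n - 2 * m) :=
    ⟨⟨_, isLegal_cyclePow_range hlt, by simp⟩,
      by rintro k ⟨S, hS, rfl⟩; exact hS.length_le_cyclePow hlt⟩
  rw [gammaGr, hgr.csSup_eq]
  omega

/-- `γ_gr(C_n^m) = n - 2m` for `n ≥ 2(m+1)`. -/
theorem stmt9 (n m : ℕ) (hm : 1 ≤ m) (hn : 2 * (m + 1) ≤ n) :
    (gammaGr (cyclePow n m) : ℤ) = (n : ℤ) - 2 * m :=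
  stmt9_general n m hn
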